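/- Let n ≥ 3, let L = {y ∈ ℝⁿ : y₁ ≥ √(y₂² + ⋯ + yₙ²)} be the Lorentz cone, let A ∈ ℝ^{n×n} be symmetric, and let {v¹, …, vⁿ} be an orthonormal system of eigenvectors of A with A v¹ = λ v¹ and A vʲ = μ vʲ for j = 2, …, n, where λ < μ. Then the sublevel set [φ_A ≤ c] = {x ∈ int(L) : ⟨Ax, x⟩ ≤ c‖x‖²} is convex for every c ∈ ℝ (equivalently, q_A is spherically quasi-convex) if and only if some unit eigenvector of A corresponding to λ belongs to L (equivalently, v¹ ∈ L ∪ (−L)). -/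

import Mathlib

open scoped RealInnerProductSpace

/-- The quadratic form `x ↦ ⟨A x, x⟩` associated with a matrix `A`. -/
noncomputable def quadForm {n : ℕ} (A : Matrix (Fin n) (Fin n) ℝ)
    (x : EuclideanSpace ℝ (Fin n)) : ℝ :=
  ⟪Matrix.toEuclideanLin A x, x⟫

/-- `K` is a cone: closed under multiplication by positive scalars. -/
def IsCone {n : ℕ} (K : Set (EuclideanSpace ℝ (Fin n))) : Prop :=
  ∀ ⦃t : ℝ⦄, 0 < t → ∀ ⦃x⦄, x ∈ K → t • x ∈ K

/-- A proper cone: a pointed closed convex cone with nonempty interior. -/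
def IsProperCone {n : ℕ} (K : Set (EuclideanSpace ℝ (Fin n))) : Prop :=
  IsCone K ∧ Convex ℝ K ∧ IsClosed K ∧ K ∩ (-K) ⊆ {0} ∧ (interior K).Nonempty

/-- The dual cone `K* = {u : ⟨u, y⟩ ≥ 0 for all y ∈ K}`. -/
def dualCone {n : ℕ} (K : Set (EuclideanSpace ℝ (Fin n))) : Set (EuclideanSpace ℝ (Fin n)) :=
  {u | ∀ y ∈ K, 0 ≤ ⟪u, y⟫}

/-- The sublevel set `[φ_A ≤ c] = {x ∈ int K : ⟨A x, x⟩ ≤ c ‖x‖²}`. -/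
noncomputable def sublevel {n : ℕ} (A : Matrix (Fin n) (Fin n) ℝ)
    (K : Set (EuclideanSpace ℝ (Fin n))) (c : ℝ) : Set (EuclideanSpace ℝ (Fin n)) :=
  {x ∈ interior K | quadForm A x ≤ c * ‖x‖ ^ 2}

/-- `‖x²‖² = x₂² + ⋯ + xₙ²`, the squared norm of the tail of `x`. -/
noncomputable def tailNormSq {n : ℕ} [NeZero n] (x : EuclideanSpace ℝ (Fin n)) : ℝ :=
  ∑ i ∈ Finset.univ.erase 0, x i ^ 2

/-- The Lorentz cone `{y : √(y₂² + ⋯ + yₙ²) ≤ y₁}`. -/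
noncomputable def lorentzCone (n : ℕ) [NeZero n] : Set (EuclideanSpace ℝ (Fin n)) :=
  {y | Real.sqrt (tailNormSq y) ≤ y 0}

/-!
Spectrally, `q_A(x) = μ‖x‖² - (μ - λ)⟪v¹, x⟫²`, so for `c < μ` the sublevel set is
`{x ∈ int L : √((μ - c)/(μ - λ)) ‖x‖ ≤ |⟪v¹, x⟫|}`, and for `c ≥ μ` it is all of `int L`.
If `v¹ ∈ L` (or `-v¹ ∈ L`, which is symmetric), self-duality of `L` makes `⟪v¹, ·⟫ ≥ 0`
on `int L`, so the absolute value can be dropped and the set is an intersection of convex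
sets. Otherwise `⟪v¹, ·⟫` takes both signs on `int L`; a sublevel set for some `c < μ`
contains a point of each sign, and if it were convex (hence connected) it would contain a
point `z ≠ 0` with `⟪v¹, z⟫ = 0`, where `φ_A(z) = μ > c`.
-/

local notation "E" n => EuclideanSpace ℝ (Fin n)

section Tail

variable {n : ℕ} [NeZero n]

/-- The tail `(x₂, …, xₙ)` of `x`, kept in `ℝⁿ` as `(0, x₂, …, xₙ)`. -/
noncomputable def lorentzTail (n : ℕ) [NeZero n] : (E n) →L[ℝ] E n :=
  ContinuousLinearMap.id ℝ _ - (EuclideanSpace.proj 0).smulRight (EuclideanSpace.single 0 1)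

lemma lorentzTail_apply (x : E n) :
    lorentzTail n x = x - x 0 • EuclideanSpace.single 0 1 := rfl

@[simp]
lemma lorentzTail_apply_zero (x : E n) : lorentzTail n x 0 = 0 := by
  simp [lorentzTail_apply]

@[simp]
lemma lorentzTail_single_zero : lorentzTail n (EuclideanSpace.single 0 1) = 0 := by
  simp [lorentzTail_apply]

@[simp]
lemma lorentzTail_lorentzTail (x : E n) : lorentzTail n (lorentzTail n x) = lorentzTail n x := by
  simp [lorentzTail_apply (lorentzTail n x)]

lemma inner_eq_mul_add_inner_lorentzTail (x y : E n) :
    ⟪x, y⟫ = x 0 * y 0 + ⟪lorentzTail n x, lorentzTail n y⟫ := by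
  simp [lorentzTail_apply, inner_sub_left, inner_sub_right, real_inner_smul_left,
    real_inner_smul_right, EuclideanSpace.inner_single_left, EuclideanSpace.inner_single_right]

lemma norm_lorentzTail (x : E n) : ‖lorentzTail n x‖ = √(tailNormSq x) := by
  have hsplit := inner_eq_mul_add_inner_lorentzTail x x
  rw [real_inner_self_eq_norm_sq, real_inner_self_eq_norm_sq, EuclideanSpace.norm_sq_eq,
    ← Finset.add_sum_erase _ _ (Finset.mem_univ 0)] at hsplit
  rw [tailNormSq, ← Real.sqrt_sq (norm_nonneg _)]
  congr 1
  simp only [Real.norm_eq_abs, sq_abs] at hsplit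
  linarith

lemma mem_lorentzCone_iff (x : E n) : x ∈ lorentzCone n ↔ ‖lorentzTail n x‖ ≤ x 0 := by
  rw [norm_lorentzTail]; rfl

lemma convex_lorentzCone : Convex ℝ (lorentzCone n) := by
  intro x hx y hy a b ha hb hab
  rw [mem_lorentzCone_iff] at *
  calc ‖lorentzTail n (a • x + b • y)‖
        ≤ a * ‖lorentzTail n x‖ + b * ‖lorentzTail n y‖ := by
        rw [map_add, map_smul, map_smul]
        refine (norm_add_le _ _).trans_eq ?_
        rw [norm_smul_of_nonneg ha, norm_smul_of_nonneg hb]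
    _ ≤ a * x 0 + b * y 0 := by gcongr
    _ = (a • x + b • y) 0 := by simp

lemma mem_interior_lorentzCone_of_norm_lorentzTail_lt {x : E n} (hx : ‖lorentzTail n x‖ < x 0) :
    x ∈ interior (lorentzCone n) :=
  interior_maximal (fun y hy => ((mem_lorentzCone_iff y).2 (le_of_lt hy)))
    (isOpen_lt (by fun_prop) (EuclideanSpace.proj (0 : Fin n)).continuous) hx

lemma single_zero_mem_interior_lorentzCone :
    EuclideanSpace.single 0 1 ∈ interior (lorentzCone n) :=
  mem_interior_lorentzCone_of_norm_lorentzTail_lt (by simp [lorentzTail_apply])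

lemma zero_notMem_interior_lorentzCone : (0 : E n) ∉ interior (lorentzCone n) := by
  intro h
  obtain ⟨ε, hε, hball⟩ := Metric.mem_nhds_iff.1 (mem_interior_iff_mem_nhds.1 h)
  have hmem : -(ε / 2) • EuclideanSpace.single (0 : Fin n) (1 : ℝ) ∈ lorentzCone n :=
    hball (by simp [norm_smul, abs_of_pos hε, hε])
  have hcoord : (-(ε / 2) • EuclideanSpace.single (0 : Fin n) (1 : ℝ)) 0 = -(ε / 2) := by simp
  linarith [(norm_nonneg _).trans ((mem_lorentzCone_iff _).1 hmem)]

end Tail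

lemma dualCone_interior_subset {n : ℕ} {K : Set (E n)} (hK : Convex ℝ K)
    (hKint : (interior K).Nonempty) : dualCone (interior K) ⊆ dualCone K := by
  intro u hu y hy
  have hclosure : K ⊆ closure (interior K) := by
    rw [hK.closure_interior_eq_closure_of_nonempty_interior hKint]
    exact subset_closure
  exact closure_minimal (t := {x | 0 ≤ ⟪u, x⟫}) hu
    (isClosed_le continuous_const (continuous_const.inner continuous_id)) (hclosure hy)

section Lorentz

variable {n : ℕ} [NeZero n]

lemma lorentzCone_subset_dualCone : lorentzCone n ⊆ dualCone (lorentzCone n) := by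
  intro u hu y hy
  rw [mem_lorentzCone_iff] at hu hy
  rw [inner_eq_mul_add_inner_lorentzTail]
  nlinarith [neg_abs_le ⟪lorentzTail n u, lorentzTail n y⟫,
    abs_real_inner_le_norm (lorentzTail n u) (lorentzTail n y),
    mul_le_mul hu hy (norm_nonneg _) ((norm_nonneg _).trans hu)]

lemma dualCone_lorentzCone_subset : dualCone (lorentzCone n) ⊆ lorentzCone n := by
  intro u hu
  rw [mem_lorentzCone_iff]
  set r := ‖lorentzTail n u‖
  have hu₀ : 0 ≤ u 0 := by
    simpa [EuclideanSpace.inner_single_right] using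
      hu _ (interior_subset single_zero_mem_interior_lorentzCone)
  have htest : r • EuclideanSpace.single 0 1 - lorentzTail n u ∈ lorentzCone n := by
    simp [mem_lorentzCone_iff, r]
  have hpair : ⟪u, r • EuclideanSpace.single 0 1 - lorentzTail n u⟫ = u 0 * r - r ^ 2 := by
    simp [inner_eq_mul_add_inner_lorentzTail u, r, sub_eq_add_neg]
  nlinarith [hu _ htest, norm_nonneg (lorentzTail n u)]

lemma dualCone_lorentzCone : dualCone (lorentzCone n) = lorentzCone n :=
  dualCone_lorentzCone_subset.antisymm lorentzCone_subset_dualCone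

lemma exists_mem_interior_lorentzCone_inner_neg {u : E n} (hu : u ∉ lorentzCone n) :
    ∃ x ∈ interior (lorentzCone n), ⟪u, x⟫ < 0 := by
  contrapose! hu
  rw [← dualCone_lorentzCone]
  exact dualCone_interior_subset convex_lorentzCone
    ⟨_, single_zero_mem_interior_lorentzCone⟩ hu

end Lorentz

lemma toEuclideanLin_apply_of_orthonormal_eigenvectors {n : ℕ} [NeZero n]
    {A : Matrix (Fin n) (Fin n) ℝ} {v : Fin n → E n} (hv : Orthonormal ℝ v) {lam mu : ℝ}
    (h1 : Matrix.toEuclideanLin A (v 0) = lam • v 0)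
    (hrest : ∀ i : Fin n, i ≠ 0 → Matrix.toEuclideanLin A (v i) = mu • v i) (x : E n) :
    Matrix.toEuclideanLin A x = mu • x + ((lam - mu) * ⟪v 0, x⟫) • v 0 := by
  let b := basisOfOrthonormalOfCardEqFinrank hv (by simp)
  have hb : ⇑b = v := coe_basisOfOrthonormalOfCardEqFinrank hv _
  suffices Matrix.toEuclideanLin A =
      mu • LinearMap.id + (lam - mu) • (innerₛₗ ℝ (v 0)).smulRight (v 0) by
    rw [this]; simp [smul_smul]
  refine b.ext fun i => ?_
  rw [hb]
  by_cases hi : i = 0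
  · subst hi
    simp [h1, hv.1 0, ← add_smul]
  · simp [hrest i hi, hv.inner_eq_zero (Ne.symm hi)]

lemma quadForm_of_orthonormal_eigenvectors {n : ℕ} [NeZero n]
    {A : Matrix (Fin n) (Fin n) ℝ} {v : Fin n → E n} (hv : Orthonormal ℝ v) {lam mu : ℝ}
    (h1 : Matrix.toEuclideanLin A (v 0) = lam • v 0)
    (hrest : ∀ i : Fin n, i ≠ 0 → Matrix.toEuclideanLin A (v i) = mu • v i) (x : E n) :
    quadForm A x = mu * ‖x‖ ^ 2 + (lam - mu) * ⟪v 0, x⟫ ^ 2 := by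
  rw [quadForm, toEuclideanLin_apply_of_orthonormal_eigenvectors hv h1 hrest, inner_add_left,
    real_inner_smul_left, real_inner_smul_left, real_inner_self_eq_norm_sq, real_inner_comm x]
  ring

lemma convex_setOf_mul_norm_le_inner {F : Type*} [NormedAddCommGroup F] [InnerProductSpace ℝ F]
    {s : ℝ} (hs : 0 ≤ s) (u : F) : Convex ℝ {x : F | s * ‖x‖ ≤ ⟪u, x⟫} := by
  intro x hx y hy a b ha hb _
  calc s * ‖a • x + b • y‖ ≤ a * (s * ‖x‖) + b * (s * ‖y‖) := by
        refine (mul_le_mul_of_nonneg_left (norm_add_le _ _) hs).trans_eq ?_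
        rw [norm_smul_of_nonneg ha, norm_smul_of_nonneg hb]
        ring
    _ ≤ a * ⟪u, x⟫ + b * ⟪u, y⟫ := by gcongr <;> assumption
    _ = ⟪u, a • x + b • y⟫ := by
        rw [inner_add_right, real_inner_smul_right, real_inner_smul_right]

section Sublevel

variable {n : ℕ} {A : Matrix (Fin n) (Fin n) ℝ} {K : Set (E n)} {u : E n} {lam mu : ℝ}

lemma convex_sublevel_of_mem_dualCone (hlm : lam < mu)
    (hq : ∀ x, quadForm A x = mu * ‖x‖ ^ 2 + (lam - mu) * ⟪u, x⟫ ^ 2)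
    (hK : Convex ℝ K) (hu : u ∈ dualCone K) (c : ℝ) : Convex ℝ (sublevel A K c) := by
  rcases le_or_gt mu c with hc | hc
  · have hall : sublevel A K c = interior K := Set.sep_eq_self_iff_mem_true.2 fun x _ => by
      rw [hq]
      nlinarith [sq_nonneg ⟪u, x⟫, sq_nonneg ‖x‖]
    rw [hall]
    exact hK.interior
  · set s := √((mu - c) / (mu - lam))
    have hcone : sublevel A K c = interior K ∩ {x | s * ‖x‖ ≤ ⟪u, x⟫} := by
      ext x
      simp only [sublevel, Set.mem_ofPred_eq, Set.mem_inter_iff, and_congr_right_iff]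
      intro hx
      rw [hq, ← sq_le_sq₀ (by positivity) (hu x (interior_subset hx)), mul_pow,
        Real.sq_sqrt (div_nonneg (sub_pos.2 hc).le (sub_pos.2 hlm).le), div_mul_eq_mul_div,
        div_le_iff₀ (sub_pos.2 hlm)]
      constructor <;> intro h <;> linarith
    rw [hcone]
    exact hK.interior.inter (convex_setOf_mul_norm_le_inner (Real.sqrt_nonneg _) u)

lemma exists_not_convex_sublevel (hlm : lam < mu)
    (hq : ∀ x, quadForm A x = mu * ‖x‖ ^ 2 + (lam - mu) * ⟪u, x⟫ ^ 2)
    (hK : (0 : E n) ∉ interior K) {x y : E n} (hx : x ∈ interior K) (hy : y ∈ interior K)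
    (hux : ⟪u, x⟫ < 0) (huy : 0 < ⟪u, y⟫) : ∃ c, ¬Convex ℝ (sublevel A K c) := by
  have hnorm : ∀ z ∈ interior K, 0 < ‖z‖ ^ 2 := fun z hz =>
    pow_pos (norm_pos_iff.2 (ne_of_mem_of_not_mem hz hK)) 2
  have hratio : ∀ z ∈ interior K, ⟪u, z⟫ ≠ 0 → quadForm A z / ‖z‖ ^ 2 < mu := by
    intro z hz hzu
    rw [div_lt_iff₀ (hnorm z hz), hq]
    nlinarith [pow_pos (abs_pos.2 hzu) 2, sq_abs ⟪u, z⟫]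
  set c := max (quadForm A x / ‖x‖ ^ 2) (quadForm A y / ‖y‖ ^ 2)
  have hc : c < mu := max_lt (hratio x hx hux.ne) (hratio y hy huy.ne')
  have hmem : ∀ z ∈ interior K, quadForm A z / ‖z‖ ^ 2 ≤ c → z ∈ sublevel A K c :=
    fun z hz h => ⟨hz, (div_le_iff₀ (hnorm z hz)).1 h⟩
  refine ⟨c, fun hconv => ?_⟩
  obtain ⟨z, hz, hzu : ⟪u, z⟫ = 0⟩ := hconv.isPreconnected.intermediate_value
    (hmem x hx (le_max_left _ _)) (hmem y hy (le_max_right _ _))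
    (continuous_const.inner continuous_id).continuousOn ⟨hux.le, huy.le⟩
  have hzq := hz.2
  rw [hq, hzu] at hzq
  nlinarith [hnorm z hz.1]

end Sublevel

theorem stmt19_general (n : ℕ) [NeZero n]
    (A : Matrix (Fin n) (Fin n) ℝ)
    (v : Fin n → EuclideanSpace ℝ (Fin n)) (hv : Orthonormal ℝ v)
    (lam mu : ℝ) (hlm : lam < mu)
    (h1 : Matrix.toEuclideanLin A (v 0) = lam • v 0)
    (hrest : ∀ i : Fin n, i ≠ 0 → Matrix.toEuclideanLin A (v i) = mu • v i) :
    (∀ c : ℝ, Convex ℝ (sublevel A (lorentzCone n) c)) ↔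
      v 0 ∈ lorentzCone n ∪ -(lorentzCone n) := by
  have hq := quadForm_of_orthonormal_eigenvectors hv h1 hrest
  have hq_neg : ∀ x, quadForm A x = mu * ‖x‖ ^ 2 + (lam - mu) * ⟪-v 0, x⟫ ^ 2 := by
    simpa only [inner_neg_left, neg_sq] using hq
  constructor
  · intro hconv
    by_contra hv0
    rw [Set.mem_union, Set.mem_neg, not_or] at hv0
    obtain ⟨x, hx, hux⟩ := exists_mem_interior_lorentzCone_inner_neg hv0.1
    obtain ⟨y, hy, huy⟩ := exists_mem_interior_lorentzCone_inner_neg hv0.2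
    rw [inner_neg_left, neg_lt_zero] at huy
    obtain ⟨c, hc⟩ :=
      exists_not_convex_sublevel hlm hq zero_notMem_interior_lorentzCone hx hy hux huy
    exact hc (hconv c)
  · rintro (hv0 | hv0) c
    · exact convex_sublevel_of_mem_dualCone hlm hq convex_lorentzCone
        (by rwa [dualCone_lorentzCone]) c
    · exact convex_sublevel_of_mem_dualCone hlm hq_neg convex_lorentzCone
        (by rwa [dualCone_lorentzCone, ← Set.mem_neg]) c

/-- Theorem 4 of the paper: for `A` with eigenvalues `λ < μ = ⋯ = μ`, all sublevel sets
`[φ_A ≤ c]` over the Lorentz cone are convex (i.e. `q_A` is spherically quasi-convex)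
iff some unit eigenvector of `A` for `λ` belongs to `L`, i.e. `v¹ ∈ L ∪ (-L)`. -/
theorem stmt19 (n : ℕ) [NeZero n] (hn : 3 ≤ n)
    (A : Matrix (Fin n) (Fin n) ℝ) (hA : A.IsSymm)
    (v : Fin n → EuclideanSpace ℝ (Fin n)) (hv : Orthonormal ℝ v)
    (lam mu : ℝ) (hlm : lam < mu)
    (h1 : Matrix.toEuclideanLin A (v 0) = lam • v 0)
    (hrest : ∀ i : Fin n, i ≠ 0 → Matrix.toEuclideanLin A (v i) = mu • v i) :
    (∀ c : ℝ, Convex ℝ (sublevel A (lorentzCone n) c)) ↔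
      v 0 ∈ lorentzCone n ∪ -(lorentzCone n) :=
  stmt19_general n A v hv lam mu hlm h1 hrest
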